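/- For n ∈ ℕ₀, p, k > 0, define Δₙ(x) = (x^{n+1}/n!) · |ₚβₖ⁽ⁿ⁾(x)| where |ₚβₖ⁽ⁿ⁾(x)| = (−1)ⁿ ₚβₖ⁽ⁿ⁾(x). Then lim_{x→0⁺} Δₙ(x) = p. -/

import Mathlib

open MeasureTheory Real Filter

noncomputable def pkBeta (p k x : ℝ) : ℝ :=
  (p / k) * ∫ t in Set.Ioi (0:ℝ), Real.exp (-(x * t) / k) / (1 + Real.exp (-t))

/-! Write the kernel `1 / (1 + e^{-t})` as the logistic function `σ(t) = 1 - σ(-t)`. Then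
`(-1)ⁿ ₚβₖ⁽ⁿ⁾(x) = p / k^{n+1} · (n! / (x/k)^{n+1} - Lₙ(x/k))` with
`Lₙ(s) = ∫₀^∞ tⁿ e^{-st} σ(-t) dt`, so `Δₙ(x) = p - p (x/k)^{n+1} Lₙ(x/k) / n!`.
Since `0 ≤ σ(-t) = σ(t) e^{-t} ≤ e^{-t}`, `Lₙ` stays in `[0, n!]`, so the correction
vanishes as `x → 0⁺`. -/

open Set
open scoped Nat Topology

lemma integrableOn_pow_mul_exp_neg_mul (n : ℕ) {b : ℝ} (hb : 0 < b) :
    IntegrableOn (fun t : ℝ => t ^ n * exp (-(b * t))) (Ioi 0) := by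
  simpa [Real.rpow_natCast] using
    integrableOn_rpow_mul_exp_neg_mul_rpow (s := n) (p := 1)
      (by linarith [n.cast_nonneg (α := ℝ)]) one_pos hb

lemma integral_pow_mul_exp_neg_mul (n : ℕ) {b : ℝ} (hb : 0 < b) :
    ∫ t in Ioi (0:ℝ), t ^ n * exp (-(b * t)) = n ! / b ^ (n + 1) := by
  have h := integral_rpow_mul_exp_neg_mul_Ioi (a := n + 1) (by positivity) hb
  rw [add_sub_cancel_right, Real.Gamma_nat_eq_factorial, ← Nat.cast_succ, Real.rpow_natCast] at h
  simp_rw [Real.rpow_natCast] at h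
  rw [h, one_div, inv_pow, inv_mul_eq_div]

noncomputable def laplaceMoment (w : ℝ → ℝ) (n : ℕ) (s : ℝ) : ℝ :=
  ∫ t in Ioi (0:ℝ), t ^ n * exp (-(s * t)) * w t

lemma integrableOn_laplaceMoment {w : ℝ → ℝ} {C : ℝ}
    (hw : AEStronglyMeasurable w (volume.restrict (Ioi 0))) (hwC : ∀ t, |w t| ≤ C)
    (n : ℕ) {s : ℝ} (hs : 0 < s) :
    IntegrableOn (fun t => t ^ n * exp (-(s * t)) * w t) (Ioi 0) :=
  (integrableOn_pow_mul_exp_neg_mul n hs).mul_bdd hw (ae_of_all _ hwC)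

lemma hasDerivAt_laplaceMoment {w : ℝ → ℝ} {C : ℝ}
    (hw : AEStronglyMeasurable w (volume.restrict (Ioi 0))) (hwC : ∀ t, |w t| ≤ C)
    (n : ℕ) {s : ℝ} (hs : 0 < s) :
    HasDerivAt (laplaceMoment w n) (-laplaceMoment w (n + 1) s) s := by
  have hderiv (t y : ℝ) : HasDerivAt (fun y => t ^ n * exp (-(y * t)) * w t)
      (-(t ^ (n + 1) * exp (-(y * t)) * w t)) y := by
    have hlin : HasDerivAt (fun y => -(y * t)) (-t) y := (hasDerivAt_mul_const t).neg
    exact ((hlin.exp.const_mul (t ^ n)).mul_const (w t)).congr_deriv (by ring)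
  have hbound : ∀ᵐ t ∂(volume.restrict (Ioi 0)), ∀ y ∈ Metric.ball s (s / 2),
      ‖-(t ^ (n + 1) * exp (-(y * t)) * w t)‖ ≤ C * (t ^ (n + 1) * exp (-(s / 2 * t))) := by
    refine (ae_restrict_iff' measurableSet_Ioi).2 (ae_of_all _ fun t (ht : 0 < t) y hy => ?_)
    have hy : s / 2 < y := by
      rw [Metric.mem_ball, Real.dist_eq, abs_lt] at hy
      linarith
    have hexp : exp (-(y * t)) ≤ exp (-(s / 2 * t)) := by gcongr
    rw [norm_neg, norm_mul, norm_mul, Real.norm_eq_abs, Real.norm_eq_abs, Real.norm_eq_abs,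
      abs_of_pos (by positivity), abs_of_pos (exp_pos _)]
    calc t ^ (n + 1) * exp (-(y * t)) * |w t| ≤ t ^ (n + 1) * exp (-(s / 2 * t)) * C := by
          gcongr
          exact hwC t
      _ = _ := mul_comm _ _
  have hmeas (y : ℝ) : AEStronglyMeasurable (fun t => t ^ n * exp (-(y * t)) * w t)
      (volume.restrict (Ioi 0)) :=
    (by fun_prop : Continuous fun t : ℝ => t ^ n * exp (-(y * t))).aestronglyMeasurable.mul hw
  have key := hasDerivAt_integral_of_dominated_loc_of_deriv_le
    (F := fun y t => t ^ n * exp (-(y * t)) * w t) (Metric.ball_mem_nhds s (half_pos hs))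
    (Eventually.of_forall hmeas)
    (integrableOn_laplaceMoment hw hwC n hs)
    (integrableOn_laplaceMoment hw hwC (n + 1) hs).neg.aestronglyMeasurable
    hbound ((integrableOn_pow_mul_exp_neg_mul (n + 1) (half_pos hs)).const_mul C)
    (ae_of_all _ fun t y _ => hderiv t y)
  have := key.2
  rw [integral_neg] at this
  exact this

lemma abs_sigmoid_le_one (t : ℝ) : |sigmoid t| ≤ 1 :=
  (abs_of_pos (sigmoid_pos t)).symm ▸ sigmoid_le_one t

lemma continuous_sigmoid_neg : Continuous fun t => sigmoid (-t) :=
  continuous_sigmoid.comp continuous_neg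

lemma pkBeta_eq_laplaceMoment (p k : ℝ) :
    pkBeta p k = fun x => p / k * laplaceMoment sigmoid 0 (x / k) := by
  funext x
  simp only [pkBeta, laplaceMoment, pow_zero, one_mul, sigmoid_def]
  congr 2
  funext t
  rw [div_eq_mul_inv]
  congr 2
  ring

lemma iteratedDeriv_pkBeta (p : ℝ) {k : ℝ} (hk : 0 < k) (n : ℕ) {x : ℝ} (hx : 0 < x) :
    iteratedDeriv n (pkBeta p k) x = p / k * (-(1 / k)) ^ n * laplaceMoment sigmoid n (x / k) := by
  induction n generalizing x with
  | zero => simp [pkBeta_eq_laplaceMoment]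
  | succ n ih =>
    have hev : iteratedDeriv n (pkBeta p k) =ᶠ[𝓝 x]
        fun y => p / k * (-(1 / k)) ^ n * laplaceMoment sigmoid n (y / k) :=
      eventually_of_mem (isOpen_Ioi.mem_nhds hx) fun y hy => ih hy
    have hM := (hasDerivAt_laplaceMoment continuous_sigmoid.aestronglyMeasurable
      abs_sigmoid_le_one n (div_pos hx hk)).comp x ((hasDerivAt_id' x).div_const k)
    rw [iteratedDeriv_succ, hev.deriv_eq]
    exact (hM.const_mul _).deriv.trans (by ring)

lemma laplaceMoment_sigmoid (n : ℕ) {s : ℝ} (hs : 0 < s) :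
    laplaceMoment sigmoid n s = n ! / s ^ (n + 1) - laplaceMoment (fun t => sigmoid (-t)) n s := by
  rw [← integral_pow_mul_exp_neg_mul n hs, laplaceMoment, laplaceMoment,
    ← integral_sub (integrableOn_pow_mul_exp_neg_mul n hs)
      (integrableOn_laplaceMoment continuous_sigmoid_neg.aestronglyMeasurable
        (fun t => abs_sigmoid_le_one (-t)) n hs)]
  congr 1
  funext t
  rw [sigmoid_neg]
  ring

lemma laplaceMoment_sigmoid_neg_nonneg (n : ℕ) (s : ℝ) :
    0 ≤ laplaceMoment (fun t => sigmoid (-t)) n s :=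
  setIntegral_nonneg measurableSet_Ioi fun t (ht : 0 < t) =>
    mul_nonneg (by positivity) (sigmoid_nonneg _)

lemma laplaceMoment_sigmoid_neg_le (n : ℕ) {s : ℝ} (hs : 0 < s) :
    laplaceMoment (fun t => sigmoid (-t)) n s ≤ n ! / (s + 1) ^ (n + 1) := by
  rw [← integral_pow_mul_exp_neg_mul n (by positivity : 0 < s + 1)]
  refine setIntegral_mono_on (integrableOn_laplaceMoment
      continuous_sigmoid_neg.aestronglyMeasurable
      (fun t => abs_sigmoid_le_one (-t)) n hs)
    (integrableOn_pow_mul_exp_neg_mul n (by positivity)) measurableSet_Ioi fun t (ht : 0 < t) => ?_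
  calc t ^ n * exp (-(s * t)) * sigmoid (-t)
      = t ^ n * exp (-(s * t)) * (sigmoid t * exp (-t)) := by rw [sigmoid_mul_rexp_neg]
    _ ≤ t ^ n * exp (-(s * t)) * (1 * exp (-t)) := by gcongr; exact sigmoid_le_one t
    _ = t ^ n * exp (-((s + 1) * t)) := by rw [one_mul, mul_assoc, ← exp_add]; ring_nf

lemma tendsto_pow_mul_laplaceMoment_sigmoid_neg {k : ℝ} (hk : 0 < k) (n : ℕ) :
    Tendsto (fun x => (x / k) ^ (n + 1) * laplaceMoment (fun t => sigmoid (-t)) n (x / k))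
      (𝓝[>] 0) (𝓝 0) := by
  have hpow : Tendsto (fun x : ℝ => n ! * (x / k) ^ (n + 1)) (𝓝[>] 0) (𝓝 0) := by
    have h : Continuous fun x : ℝ => n ! * (x / k) ^ (n + 1) := by fun_prop
    simpa using (h.tendsto 0).mono_left nhdsWithin_le_nhds
  refine squeeze_zero' (eventually_nhdsWithin_of_forall fun x (hx : 0 < x) => ?_)
    (eventually_nhdsWithin_of_forall fun x (hx : 0 < x) => ?_) hpow
  · exact mul_nonneg (by positivity) (laplaceMoment_sigmoid_neg_nonneg n _)
  · have hs : 0 < x / k := div_pos hx hk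
    calc (x / k) ^ (n + 1) * laplaceMoment (fun t => sigmoid (-t)) n (x / k)
        ≤ (x / k) ^ (n + 1) * n ! := by
          gcongr
          exact (laplaceMoment_sigmoid_neg_le n hs).trans
            (div_le_self (by positivity) (one_le_pow₀ (by linarith)))
      _ = n ! * (x / k) ^ (n + 1) := mul_comm _ _

lemma pkBeta_Delta_eq (p : ℝ) {k : ℝ} (hk : 0 < k) (n : ℕ) {x : ℝ} (hx : 0 < x) :
    x ^ (n + 1) / n ! * ((-1) ^ n * iteratedDeriv n (pkBeta p k) x)
      = p - p / n ! * ((x / k) ^ (n + 1) * laplaceMoment (fun t => sigmoid (-t)) n (x / k)) := by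
  rw [iteratedDeriv_pkBeta p hk n hx, laplaceMoment_sigmoid n (div_pos hx hk)]
  have hsign (M : ℝ) : (-1) ^ n * (p / k * (-(1 / k)) ^ n * M) = p / k ^ (n + 1) * M := by
    rw [← mul_assoc, mul_left_comm, ← mul_pow, neg_one_mul, neg_neg, one_div, inv_pow]
    field_simp
    ring
  rw [hsign, div_pow]
  field_simp

theorem pkBeta_Delta_limit_general (p k : ℝ) (hk : 0 < k) (n : ℕ) :
    Tendsto (fun x : ℝ => x ^ (n + 1) / (n.factorial : ℝ) *
        ((-1 : ℝ) ^ n * iteratedDeriv n (pkBeta p k) x))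
      (nhdsWithin 0 (Set.Ioi 0)) (nhds p) := by
  have hlim := (tendsto_const_nhds (x := p)).sub
    ((tendsto_pow_mul_laplaceMoment_sigmoid_neg hk n).const_mul (p / n !))
  rw [mul_zero, sub_zero] at hlim
  exact hlim.congr' (eventually_nhdsWithin_of_forall fun x hx => (pkBeta_Delta_eq p hk n hx).symm)

theorem pkBeta_Delta_limit (p k : ℝ) (hp : 0 < p) (hk : 0 < k) (n : ℕ) :
    Tendsto (fun x : ℝ => x ^ (n + 1) / (n.factorial : ℝ) *
        ((-1 : ℝ) ^ n * iteratedDeriv n (pkBeta p k) x))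
      (nhdsWithin 0 (Set.Ioi 0)) (nhds p) :=
  pkBeta_Delta_limit_general p k hk n
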